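/- arXiv:1910.03287 — 2 statements merged into one kernel-verified Lean document; each statement's English description precedes it below -/
import Mathlib

section
/- Greedy is 1/2-competitive for edge-weighted matching with free disposal in the offline matroid-free abstraction: if for each online vertex j the algorithm gains the maximum over i of (w_{ij} - current weight held at i)_+ and this gain is added to the total, then the final total is at least half the weight of any offline assignment matching each j to one i with each i keeping only its heaviest edge. Formally: let σ : R → L be any assignment; the greedy total G satisfies 2G ≥ Σ_{i ∈ L} max_{j : σ(j) = i} w_{ij}. -/
open scoped NNReal

theorem stmt_18 {L : Type*} [Fintype L] [DecidableEq L] {n : ℕ}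
    (w : L → Fin n → ℝ≥0)
    (pick : Fin n → L) (h : ℕ → L → ℝ≥0) (G : ℕ → ℝ≥0)
    (h0 : ∀ i, h 0 i = 0) (hG0 : G 0 = 0)
    (hpick : ∀ t : Fin n, ∀ i, w i t - h t i ≤ w (pick t) t - h t (pick t))
    (hGstep : ∀ t : Fin n, G (t + 1) = G t + (w (pick t) t - h t (pick t)))
    (hhstep : ∀ t : Fin n, ∀ i,
      h (t + 1) i = if i = pick t then max (h t i) (w i t) else h t i)
    (σ : Fin n → L) :
    (∑ i, (Finset.univ.filter fun t => σ t = i).sup fun t => w i t) ≤ 2 * G n := by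
  set gain : Fin n → ℝ≥0 := fun t => w (pick t) t - h t (pick t) with hgain
  -- monotonicity of h
  have hmono : ∀ m ≤ n, ∀ t ≤ m, ∀ i, h t i ≤ h m i := by
    intro m hm
    induction m with
    | zero => intro t ht i; obtain rfl : t = 0 := Nat.le_zero.mp ht; exact le_rfl
    | succ m ih =>
      intro t ht i
      rcases Nat.eq_or_lt_of_le ht with rfl | ht'
      · exact le_rfl
      · have h1 : h t i ≤ h m i := ih (by omega) t (by omega) i
        have h2 : h m i ≤ h (m + 1) i := by
          rw [show h (m+1) i = h ((⟨m, by omega⟩ : Fin n) + 1) i by norm_num,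
            hhstep ⟨m, by omega⟩ i]
          split <;> simp
        exact h1.trans h2
  -- sum of h equals G
  have hsum : ∀ m ≤ n, ∑ i, h m i = G m := by
    intro m hm
    induction m with
    | zero => simp [h0, hG0]
    | succ m ih =>
      have hmn : m < n := hm
      set tm : Fin n := ⟨m, hmn⟩ with htm
      have hupd : h (m + 1) = Function.update (h m) (pick tm) (max (h m (pick tm)) (w (pick tm) tm)) := by
        funext i
        have := hhstep tm i
        simp only [htm] at this
        rw [show ((tm : ℕ) + 1) = m + 1 by simp [htm]] at this
        rw [this]
        by_cases hi : i = pick tm <;> simp [hi, Function.update, ← htm]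
      have hmax : ∀ a b : ℝ≥0, max a b = a + (b - a) := by
        intro a b
        rcases le_total a b with hab | hab
        · rw [max_eq_right hab, add_tsub_cancel_of_le hab]
        · rw [max_eq_left hab, tsub_eq_zero_of_le hab, add_zero]
      have : ∑ i, h (m + 1) i = ∑ i, h m i + gain tm := by
        rw [hupd, Finset.sum_update_of_mem (Finset.mem_univ _)]
        rw [hmax, hgain]
        have : ∑ i, h m i = h m (pick tm) + ∑ i ∈ Finset.univ \ {pick tm}, h m i := by
          rw [← Finset.sum_eq_add_sum_sdiff_singleton_of_mem (Finset.mem_univ (pick tm))]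
        rw [this]
        simp only [htm]
        ring
      rw [this, ih (by omega)]
      have := hGstep tm
      rw [show ((tm : ℕ) + 1) = m + 1 by simp [htm]] at this
      rw [this]
  -- G n as sum of gains
  have hGsum : ∀ m ≤ n, G m = ∑ t ∈ Finset.univ.filter (fun t : Fin n => (t : ℕ) < m), gain t := by
    intro m hm
    induction m with
    | zero => simp [hG0]
    | succ m ih =>
      have hmn : m < n := hm
      set tm : Fin n := ⟨m, hmn⟩ with htm
      have hset : Finset.univ.filter (fun t : Fin n => (t : ℕ) < m + 1)
          = insert tm (Finset.univ.filter (fun t : Fin n => (t : ℕ) < m)) := by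
        ext t
        simp [Fin.ext_iff, htm]
        omega
      have hnotmem : tm ∉ Finset.univ.filter (fun t : Fin n => (t : ℕ) < m) := by
        simp [htm]
      rw [hset, Finset.sum_insert hnotmem, ← ih (by omega)]
      have := hGstep tm
      rw [show ((tm : ℕ) + 1) = m + 1 by simp [htm]] at this
      rw [this, add_comm]
  -- main bound
  have key : ∀ i, (Finset.univ.filter fun t => σ t = i).sup (fun t => w i t)
      ≤ h n i + ∑ t ∈ Finset.univ.filter (fun t => σ t = i), gain t := by
    intro i
    apply Finset.sup_le
    intro t ht
    have h1 : w i t ≤ h t i + gain t := by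
      have := hpick t i
      calc w i t ≤ h t i + (w i t - h t i) := le_add_tsub
        _ ≤ h t i + gain t := by exact add_le_add le_rfl this
    have h2 : h (t : ℕ) i ≤ h n i := hmono n le_rfl t (le_of_lt t.isLt) i
    have h3 : gain t ≤ ∑ t' ∈ Finset.univ.filter (fun t' => σ t' = i), gain t' :=
      Finset.single_le_sum (fun _ _ => zero_le) ht
    calc w i t ≤ h t i + gain t := h1
      _ ≤ h n i + ∑ t' ∈ Finset.univ.filter (fun t' => σ t' = i), gain t' := add_le_add h2 h3
  calc (∑ i, (Finset.univ.filter fun t => σ t = i).sup fun t => w i t)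
      ≤ ∑ i, (h n i + ∑ t ∈ Finset.univ.filter (fun t => σ t = i), gain t) :=
        Finset.sum_le_sum (fun i _ => key i)
    _ = (∑ i, h n i) + ∑ i, ∑ t ∈ Finset.univ.filter (fun t => σ t = i), gain t := by
        rw [Finset.sum_add_distrib]
    _ = G n + ∑ t, gain t := by
        rw [hsum n le_rfl, Finset.sum_fiberwise]
    _ = G n + G n := by
        rw [hGsum n le_rfl]
        congr 1
        apply Finset.sum_congr _ (fun _ _ => rfl)
        ext t; simp [t.isLt]
    _ = 2 * G n := by ring
end

section
/- For the recurrence g_k = g_{k-1} - γ g_{k-2} with g_0 = g_1 = 1 and 0 ≤ γ ≤ 1/4, the generating comparison 2^{-k} g_k ≤ 2^{-k'} g_{k'} holds whenever k ≥ k'; i.e., the sequence h_k = 2^{-k} g_k is nonincreasing in k. -/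
theorem stmt_19 (γ : ℝ) (hγ0 : 0 ≤ γ) (hγ1 : γ ≤ 1 / 4)
    (g : ℕ → ℝ) (h0 : g 0 = 1) (h1 : g 1 = 1)
    (hrec : ∀ k, 2 ≤ k → g k = g (k - 1) - γ * g (k - 2)) :
    ∀ k' k : ℕ, k' ≤ k →
      (2 : ℝ) ^ (-(k : ℤ)) * g k ≤ (2 : ℝ) ^ (-(k' : ℤ)) * g k' := by
  have hrec' : ∀ n : ℕ, g (n + 2) = g (n + 1) - γ * g n := by
    intro n
    have := hrec (n + 2) (by omega)
    simpa using this
  have key : ∀ k, 0 ≤ g k ∧ g k ≤ 2 * g (k + 1) := by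
    intro k
    induction k with
    | zero => constructor <;> simp [h0, h1]
    | succ n ih =>
      obtain ⟨hn, hn2⟩ := ih
      have hg1 : 0 ≤ g (n + 1) := by linarith
      constructor
      · exact hg1
      · rw [hrec' n]
        nlinarith [mul_le_mul_of_nonneg_right hγ1 hn, mul_nonneg hγ0 hn]
  have step : ∀ k, g (k + 1) ≤ 2 * g k := by
    intro k
    rcases k with _ | n
    · simp [h0, h1]
    · rw [hrec' n]
      have h1' := (key n).1
      have h2' := (key (n + 1)).1
      nlinarith [mul_nonneg hγ0 h1']
  have pow_step : ∀ k : ℕ,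
      (2 : ℝ) ^ (-((k + 1 : ℕ) : ℤ)) * g (k + 1) ≤ (2 : ℝ) ^ (-(k : ℤ)) * g k := by
    intro k
    have hp : (0 : ℝ) < (2 : ℝ) ^ (-((k + 1 : ℕ) : ℤ)) := by positivity
    have h2 : (2 : ℝ) ^ (-((k + 1 : ℕ) : ℤ)) * 2 = (2 : ℝ) ^ (-(k : ℤ)) := by
      rw [← zpow_add_one₀ (two_ne_zero)]
      push_cast
      ring_nf
    calc (2 : ℝ) ^ (-((k + 1 : ℕ) : ℤ)) * g (k + 1)
        ≤ (2 : ℝ) ^ (-((k + 1 : ℕ) : ℤ)) * (2 * g k) := by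
          exact mul_le_mul_of_nonneg_left (step k) hp.le
      _ = (2 : ℝ) ^ (-(k : ℤ)) * g k := by rw [← h2]; ring
  intro k' k hk
  induction k with
  | zero =>
    have : k' = 0 := Nat.le_zero.mp hk
    subst this; simp
  | succ n ih =>
    rcases Nat.lt_or_ge k' (n + 1) with h | h
    · exact le_trans (pow_step n) (ih (Nat.lt_succ_iff.mp h))
    · have : k' = n + 1 := le_antisymm hk h
      subst this; simp
end
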